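/- With $\mathcal{S}_\omega$, $\mathcal{K}$, and $\mathcal{J}_\omega$ as in the cubic-quintic setting, the two minimization problems coincide: $\inf\{\mathcal{S}_\omega(u) : u \in H^1(\mathbb{R}^3)\setminus\{0\},\ \mathcal{K}(u) = 0\} = \inf\{\mathcal{J}_\omega(u) : u \in H^1(\mathbb{R}^3)\setminus\{0\},\ \mathcal{K}(u) \le 0\}$. -/

import Mathlib

open MeasureTheory

noncomputable section

/-- Membership in `H¹(ℝ³)` (together with the `L⁴`, `L⁶` integrability that
follows from the Sobolev embedding). -/
def InH1 (u : EuclideanSpace ℝ (Fin 3) → ℂ) : Prop :=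
  MemLp u 2 volume ∧ Differentiable ℝ u ∧
    MemLp (fun x => ‖fderiv ℝ u x‖) 2 volume ∧
    MemLp u 4 volume ∧ MemLp u 6 volume

/-- `‖∇u‖₂²`. -/
def gradSq (u : EuclideanSpace ℝ (Fin 3) → ℂ) : ℝ :=
  (eLpNorm (fun x => ‖fderiv ℝ u x‖) 2 volume).toReal ^ 2

/-- The action `S_ω`. -/
def S (ω : ℝ) (u : EuclideanSpace ℝ (Fin 3) → ℂ) : ℝ :=
  (1 / 2) * gradSq u - (1 / 4) * (eLpNorm u 4 volume).toReal ^ 4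
    - (1 / 6) * (eLpNorm u 6 volume).toReal ^ 6
    + (ω / 2) * (eLpNorm u 2 volume).toReal ^ 2

/-- The virial functional `K`. -/
def K (u : EuclideanSpace ℝ (Fin 3) → ℂ) : ℝ :=
  gradSq u - (3 / 4) * (eLpNorm u 4 volume).toReal ^ 4
    - (eLpNorm u 6 volume).toReal ^ 6

/-- `J_ω = S_ω - (1/2) K`. -/
def J (ω : ℝ) (u : EuclideanSpace ℝ (Fin 3) → ℂ) : ℝ :=
  S ω u - (1 / 2) * K u

open scoped ENNReal

/-! On `K = 0` the functionals `S_ω` and `J_ω = S_ω - K / 2` agree, so every value of the first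
problem is a value of the second. Conversely, if `K u ≤ 0` and `u ≠ 0`, the amplitude rescaling
gives `K (c • u) = c² (‖∇u‖₂² - ¾ c² ‖u‖₄⁴ - c⁴ ‖u‖₆⁶)`, whose bracket is `‖∇u‖₂² > 0` at `c = 0`
and `K u ≤ 0` at `c = 1`, so it vanishes for some `c ∈ (0, 1]`; since `J_ω` is a sum of
nonnegative multiples of even powers of `c`, downscaling does not increase it. Each value of one
problem is thus dominated by a value of the other, which forces equal infima even when the sets are
empty or unbounded below.

The only analytic input is `‖∇u‖₂ > 0` for `u ≠ 0`: if `∇u = 0` a.e., then on almost every line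
parallel to a coordinate axis `u` has derivative `0` a.e., hence is constant there, and a constant
in `L²(ℝ)` vanishes. -/

def sliceEquiv (n : ℕ) : (Fin n → ℝ) × ℝ ≃ᵐ EuclideanSpace ℝ (Fin (n + 1)) :=
  MeasurableEquiv.prodComm.trans
    ((MeasurableEquiv.piFinSuccAbove (fun _ => ℝ) 0).symm.trans (MeasurableEquiv.toLp 2 _))

theorem sliceEquiv_apply (n : ℕ) (y : Fin n → ℝ) (t : ℝ) :
    sliceEquiv n (y, t) = WithLp.toLp 2 (Fin.cons t y) := by
  simp [sliceEquiv, MeasurableEquiv.piFinSuccAbove]; rfl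

theorem measurePreserving_sliceEquiv (n : ℕ) :
    MeasurePreserving (sliceEquiv n) (volume.prod volume) volume :=
  (PiLp.volume_preserving_toLp _).comp
    ((volume_preserving_piFinSuccAbove _ 0).symm.comp Measure.measurePreserving_swap)

theorem hasDerivAt_sliceEquiv (n : ℕ) (y : Fin n → ℝ) (t : ℝ) :
    HasDerivAt (fun s => sliceEquiv n (y, s)) (WithLp.toLp 2 (Pi.single 0 1)) t := by
  have hline : (fun s => sliceEquiv n (y, s))
      = fun s => WithLp.toLp 2 (Function.update (Fin.cons 0 y : Fin (n + 1) → ℝ) 0 s) := by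
    funext s; rw [sliceEquiv_apply, Fin.update_cons_zero]
  rw [hline]
  exact (PiLp.continuousLinearEquiv 2 ℝ _).symm.hasFDerivAt.comp_hasDerivAt t
    (hasDerivAt_update (Fin.cons 0 y : Fin (n + 1) → ℝ) 0 t)

section Slicing

variable {F : Type*} [NormedAddCommGroup F] [NormedSpace ℝ F] [CompleteSpace F]

theorem eq_zero_of_hasDerivAt_of_ae_eq_zero {f f' : ℝ → F} {n : ℕ} (hn : n ≠ 0)
    (hf : ∀ t, HasDerivAt f (f' t) t) (hf' : f' =ᵐ[volume] 0)
    (hint : Integrable (fun t => ‖f t‖ ^ n)) (t : ℝ) : f t = 0 := by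
  have hconst : ∀ s, f s = f 0 := fun s => by
    have hint' : IntervalIntegrable f' volume 0 s :=
      ((integrable_zero ℝ F volume).congr hf'.symm).intervalIntegrable
    rw [← sub_eq_zero, ← intervalIntegral.integral_eq_sub_of_hasDerivAt (fun s _ => hf s) hint']
    exact intervalIntegral.integral_zero_ae (hf'.mono fun s hs _ => hs)
  have hint0 : Integrable (fun _ : ℝ => ‖f 0‖ ^ n) :=
    hint.congr (.of_forall fun s => by simp only [hconst s])
  rcases integrable_const_iff.1 hint0 with h | h
  · rw [hconst, ← norm_eq_zero, ← pow_eq_zero_iff hn, h]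
  · simpa using h.measure_univ_lt_top

variable {Y : Type*} [MeasurableSpace Y] {μ : Measure Y} [SFinite μ]

theorem ae_forall_eq_zero_of_hasDerivAt_of_ae_eq_zero {g g' : Y × ℝ → F} {n : ℕ} (hn : n ≠ 0)
    (hg : ∀ y t, HasDerivAt (fun s => g (y, s)) (g' (y, t)) t) (hg' : g' =ᵐ[μ.prod volume] 0)
    (hint : Integrable (fun q => ‖g q‖ ^ n) (μ.prod volume)) :
    ∀ᵐ y ∂μ, ∀ t, g (y, t) = 0 := by
  filter_upwards [Measure.ae_ae_of_ae_prod hg', hint.prod_right_ae] with y hy hy'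
  exact eq_zero_of_hasDerivAt_of_ae_eq_zero hn (hg y) hy hy'

theorem ae_eq_zero_of_fderiv_ae_eq_zero {n : ℕ} {u : EuclideanSpace ℝ (Fin (n + 1)) → F}
    (hu : Differentiable ℝ u) (hfd : ∀ᵐ x, fderiv ℝ u x = 0) (hLp : MemLp u 2) :
    u =ᵐ[volume] 0 := by
  have hP := measurePreserving_sliceEquiv n
  have hslices := ae_forall_eq_zero_of_hasDerivAt_of_ae_eq_zero (g := u ∘ sliceEquiv n)
    (g' := fun q => fderiv ℝ u (sliceEquiv n q) (WithLp.toLp 2 (Pi.single 0 1)))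
    two_ne_zero (fun y t => (hu _).hasFDerivAt.comp_hasDerivAt t (hasDerivAt_sliceEquiv n y t))
    ((hP.quasiMeasurePreserving.ae hfd).mono fun q hq => by simp [hq])
    ((hLp.comp_measurePreserving hP).integrable_norm_pow two_ne_zero)
  rw [Filter.EventuallyEq, ← hP.map_eq, (sliceEquiv n).measurableEmbedding.ae_map_iff]
  exact (Measure.quasiMeasurePreserving_fst.ae hslices).mono fun q hq => hq q.2

end Slicing

section Scaling

variable {α F : Type*} [MeasurableSpace α] [NormedAddCommGroup F] [NormedSpace ℝ F]

theorem toReal_eLpNorm_const_smul (c : ℝ) (f : α → F) (p : ℝ≥0∞) (μ : Measure α) :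
    (eLpNorm (c • f) p μ).toReal = |c| * (eLpNorm f p μ).toReal := by
  rw [eLpNorm_const_smul, ENNReal.toReal_mul, toReal_enorm, Real.norm_eq_abs]

theorem norm_fderiv_const_smul {E : Type*} [NormedAddCommGroup E] [NormedSpace ℝ E]
    (c : ℝ) (u : E → F) :
    (fun x => ‖fderiv ℝ (c • u) x‖) = |c| • fun x => ‖fderiv ℝ u x‖ := by
  funext x
  rw [fderiv_const_smul_field, Pi.smul_apply, norm_smul, Real.norm_eq_abs, Pi.smul_apply,
    smul_eq_mul]

end Scaling

variable {u : EuclideanSpace ℝ (Fin 3) → ℂ}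

theorem gradSq_const_smul (c : ℝ) :
    gradSq (c • u) = c ^ 2 * gradSq u := by
  rw [gradSq, gradSq, norm_fderiv_const_smul, toReal_eLpNorm_const_smul, mul_pow, abs_abs, sq_abs]

theorem InH1.const_smul (hu : InH1 u) (c : ℝ) : InH1 (c • u) := by
  obtain ⟨h2, hd, hgrad, h4, h6⟩ := hu
  refine ⟨h2.const_smul c, hd.const_smul c, ?_, h4.const_smul c, h6.const_smul c⟩
  rw [norm_fderiv_const_smul]
  exact hgrad.const_smul |c|

theorem gradSq_pos (h2 : MemLp u 2 volume) (hd : Differentiable ℝ u)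
    (hgrad : MemLp (fun x => ‖fderiv ℝ u x‖) 2 volume) (hne : ¬ u =ᵐ[volume] 0) :
    0 < gradSq u := by
  refine pow_pos (ENNReal.toReal_pos ?_ hgrad.eLpNorm_ne_top) 2
  rw [Ne, eLpNorm_eq_zero_iff hgrad.1 two_ne_zero]
  refine fun h0 => hne (ae_eq_zero_of_fderiv_ae_eq_zero hd ?_ h2)
  filter_upwards [h0] with x hx
  simpa using hx

theorem K_const_smul (c : ℝ) :
    K (c • u) = c ^ 2 * gradSq u - 3 / 4 * c ^ 4 * (eLpNorm u 4 volume).toReal ^ 4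
      - c ^ 6 * (eLpNorm u 6 volume).toReal ^ 6 := by
  have h4 : |c| ^ 4 = c ^ 4 := Even.pow_abs ⟨2, rfl⟩ c
  have h6 : |c| ^ 6 = c ^ 6 := Even.pow_abs ⟨3, rfl⟩ c
  rw [K, gradSq_const_smul, toReal_eLpNorm_const_smul, toReal_eLpNorm_const_smul, mul_pow,
    mul_pow, h4, h6]
  ring

theorem J_eq (ω : ℝ) :
    J ω u = ω / 2 * (eLpNorm u 2 volume).toReal ^ 2 + 1 / 8 * (eLpNorm u 4 volume).toReal ^ 4
      + 1 / 3 * (eLpNorm u 6 volume).toReal ^ 6 := by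
  rw [J, S, K]
  ring

theorem J_const_smul_le {ω c : ℝ} (hω : 0 ≤ ω) (hc : |c| ≤ 1) :
    J ω (c • u) ≤ J ω u := by
  simp only [J_eq, toReal_eLpNorm_const_smul]
  gcongr <;> exact mul_le_of_le_one_left ENNReal.toReal_nonneg hc

theorem S_eq_J_of_K_eq_zero (ω : ℝ) (hK : K u = 0) : S ω u = J ω u := by
  rw [J, hK, mul_zero, sub_zero]

theorem exists_K_const_smul_eq_zero (hg : 0 < gradSq u) (hK : K u ≤ 0) :
    ∃ c : ℝ, 0 < c ∧ c ≤ 1 ∧ K (c • u) = 0 := by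
  set a := (eLpNorm u 4 volume).toReal ^ 4
  set b := (eLpNorm u 6 volume).toReal ^ 6
  set φ : ℝ → ℝ := fun c => gradSq u - 3 / 4 * c ^ 2 * a - c ^ 4 * b
  have hφ : ContinuousOn φ (Set.Icc 0 1) := by fun_prop
  have h0 : (0 : ℝ) ∈ Set.Ico (φ 1) (φ 0) := ⟨by simpa [φ, K] using hK, by simpa [φ] using hg⟩
  obtain ⟨c, ⟨hc0, hc1⟩, hφc⟩ := intermediate_value_Ioc' zero_le_one hφ h0
  refine ⟨c, hc0, hc1, ?_⟩
  rw [K_const_smul, show c ^ 2 * gradSq u - 3 / 4 * c ^ 4 * a - c ^ 6 * b = c ^ 2 * φ c by ring,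
    hφc, mul_zero]

theorem exists_K_eq_zero_J_le {ω : ℝ} (hω : 0 ≤ ω) (hu : InH1 u) (hne : ¬ u =ᵐ[volume] 0)
    (hK : K u ≤ 0) :
    ∃ v, (InH1 v ∧ ¬ v =ᵐ[volume] 0 ∧ K v = 0) ∧ J ω v ≤ J ω u := by
  obtain ⟨c, hc0, hc1, hKc⟩ :=
    exists_K_const_smul_eq_zero (gradSq_pos hu.1 hu.2.1 hu.2.2.1 hne) hK
  refine ⟨c • u, ⟨hu.const_smul c, fun h => hne ?_, hKc⟩,
    J_const_smul_le hω (abs_le.2 ⟨by linarith, hc1⟩)⟩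
  filter_upwards [h] with x hx
  simpa [hc0.ne'] using hx

/-- The constrained minimization problems coincide:
`inf {S_ω(u) : u ∈ H¹ \ {0}, K(u) = 0} = inf {J_ω(u) : u ∈ H¹ \ {0}, K(u) ≤ 0}`. -/
theorem stmt_6 (ω : ℝ) (hω : 0 < ω) :
    sInf ((fun u => S ω u) ''
        {u : EuclideanSpace ℝ (Fin 3) → ℂ | InH1 u ∧
          ¬ u =ᵐ[(volume : Measure (EuclideanSpace ℝ (Fin 3)))] (fun _ => 0) ∧
          K u = 0})
      = sInf ((fun u => J ω u) ''
        {u : EuclideanSpace ℝ (Fin 3) → ℂ | InH1 u ∧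
          ¬ u =ᵐ[(volume : Measure (EuclideanSpace ℝ (Fin 3)))] (fun _ => 0) ∧
          K u ≤ 0}) := by
  refine csInf_eq_csInf_of_forall_exists_le ?_ ?_
  · rintro _ ⟨u, ⟨hu, hne, hK⟩, rfl⟩
    exact ⟨J ω u, ⟨u, ⟨hu, hne, hK.le⟩, rfl⟩, (S_eq_J_of_K_eq_zero ω hK).ge⟩
  · rintro _ ⟨u, ⟨hu, hne, hK⟩, rfl⟩
    obtain ⟨v, hv, hJ⟩ := exists_K_eq_zero_J_le hω.le hu hne hK
    exact ⟨S ω v, ⟨v, hv, rfl⟩, (S_eq_J_of_K_eq_zero ω hv.2.2).trans_le hJ⟩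

end
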